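/- Let n ≥ 3 be odd and 0 < δ < 1. Then the equation α^(n−1) − α^n = δ·(n−1)^(n−1)/n^n has exactly three real solutions: one in (0, (n−1)/n), one in ((n−1)/n, 1), and one in (−(n−1)/n, 0). -/

import Mathlib

/-!
Write `n = k + 1` with `k` even and `k ≥ 2`, and `f(x) = x^k - x^(k+1) = x^k (1 - x)`, with
`c = k / (k + 1)`. On `[0, 1]`, `f` vanishes at the endpoints and has its unique critical point at `c`,
where it takes its maximum `k^k / (k+1)^(k+1)`; on `(-∞, 0]` it is strictly decreasing because
`x^k` is even, and `f(-c) > f(c)`; beyond `1` it is negative. The right-hand side is `δ f(c)` with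
`0 < δ < 1`, so the intermediate value theorem gives a root in each of `(0, c)`, `(c, 1)`, `(-c, 0)`,
and strict monotonicity on the three pieces excludes any other root.
-/

open Set

noncomputable def tusi (k : ℕ) (x : ℝ) : ℝ := x ^ k - x ^ (k + 1)

section Tusi

variable {k : ℕ}

lemma tusi_eq_pow_mul (k : ℕ) (x : ℝ) : tusi k x = x ^ k * (1 - x) := by
  rw [tusi]; ring

lemma continuous_tusi (k : ℕ) : Continuous (tusi k) := by
  unfold tusi; fun_prop

lemma tusi_zero (hk : k ≠ 0) : tusi k 0 = 0 := by
  simp [tusi, hk]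

lemma tusi_one (k : ℕ) : tusi k 1 = 0 := by
  simp [tusi]

lemma tusi_div_succ (k : ℕ) : tusi k (k / (k + 1)) = k ^ k / (k + 1) ^ (k + 1) := by
  rw [tusi_eq_pow_mul, div_pow, pow_succ (k + 1 : ℝ) k]
  field_simp
  ring

lemma tusi_neg_of_one_lt {x : ℝ} (hx : 1 < x) : tusi k x < 0 := by
  rw [tusi_eq_pow_mul]
  exact mul_neg_of_pos_of_neg (by positivity) (by linarith)

lemma tusi_lt_tusi_neg (hk : Even k) {x : ℝ} (hx : 0 < x) : tusi k x < tusi k (-x) := by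
  rw [tusi_eq_pow_mul, tusi_eq_pow_mul, hk.neg_pow]
  exact mul_lt_mul_of_pos_left (by linarith) (by positivity)

lemma hasDerivAt_tusi (hk : k ≠ 0) (x : ℝ) :
    HasDerivAt (tusi k) (x ^ (k - 1) * (k - (k + 1) * x)) x := by
  refine ((hasDerivAt_pow k x).sub (hasDerivAt_pow (k + 1) x)).congr_deriv ?_
  obtain ⟨m, rfl⟩ := Nat.exists_eq_succ_of_ne_zero hk
  push_cast
  ring

lemma strictMonoOn_tusi (hk : k ≠ 0) : StrictMonoOn (tusi k) (Icc 0 (k / (k + 1))) := by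
  refine strictMonoOn_of_deriv_pos (convex_Icc _ _) (continuous_tusi k).continuousOn
    fun x hx => ?_
  rw [interior_Icc] at hx
  have : (k + 1) * x < k := (lt_div_iff₀' (by positivity)).1 hx.2
  rw [(hasDerivAt_tusi hk x).deriv]
  exact mul_pos (pow_pos hx.1 _) (by linarith)

lemma strictAntiOn_tusi_Icc (hk : k ≠ 0) : StrictAntiOn (tusi k) (Icc (k / (k + 1)) 1) := by
  refine strictAntiOn_of_deriv_neg (convex_Icc _ _) (continuous_tusi k).continuousOn
    fun x hx => ?_
  rw [interior_Icc] at hx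
  have : (k : ℝ) < (k + 1) * x := (div_lt_iff₀' (by positivity)).1 hx.1
  rw [(hasDerivAt_tusi hk x).deriv]
  have hx0 : 0 < x := lt_of_le_of_lt (by positivity) hx.1
  exact mul_neg_of_pos_of_neg (pow_pos hx0 _) (by linarith)

lemma strictAntiOn_tusi_Iic (hk : Even k) : StrictAntiOn (tusi k) (Iic 0) := by
  intro x hx y hy hxy
  rw [tusi_eq_pow_mul, tusi_eq_pow_mul]
  have habs : |y| ≤ |x| := by
    rw [abs_of_nonpos (mem_Iic.1 hx), abs_of_nonpos (mem_Iic.1 hy)]; linarith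
  have hpow : y ^ k ≤ x ^ k := by
    simpa only [hk.pow_abs] using pow_le_pow_left₀ (abs_nonneg y) habs k
  exact mul_lt_mul' hpow (by linarith) (by linarith [mem_Iic.1 hy])
    (hk.pow_pos (by linarith [mem_Iic.1 hy]))

lemma eq_or_eq_or_eq_of_tusi_eq (hk : Even k) (hk0 : k ≠ 0) {t x y z β : ℝ} (ht : 0 < t)
    (hx : x ∈ Icc 0 (k / (k + 1) : ℝ)) (hy : y ∈ Icc (k / (k + 1) : ℝ) 1) (hz : z ≤ 0)
    (hxt : tusi k x = t) (hyt : tusi k y = t) (hzt : tusi k z = t) (hβ : tusi k β = t) :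
    β = x ∨ β = y ∨ β = z := by
  rcases le_or_gt β 0 with h0 | h0
  · exact Or.inr <| Or.inr <| (strictAntiOn_tusi_Iic hk).injOn h0 hz (hβ.trans hzt.symm)
  rcases le_or_gt β (k / (k + 1)) with hc | hc
  · exact Or.inl <| (strictMonoOn_tusi hk0).injOn ⟨h0.le, hc⟩ hx (hβ.trans hxt.symm)
  rcases le_or_gt β 1 with h1 | h1
  · exact Or.inr <| Or.inl <| (strictAntiOn_tusi_Icc hk0).injOn ⟨hc.le, h1⟩ hy (hβ.trans hyt.symm)
  · linarith [tusi_neg_of_one_lt (k := k) h1]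

end Tusi

theorem general_tusi_three_roots (n : ℕ) (hn : 3 ≤ n) (hodd : Odd n)
    (δ : ℝ) (h0 : 0 < δ) (h1 : δ < 1) :
    ∃ α₁ α₂ α₃ : ℝ,
      (0 < α₁ ∧ α₁ < ((n : ℝ) - 1) / n) ∧
      (((n : ℝ) - 1) / n < α₂ ∧ α₂ < 1) ∧
      (-(((n : ℝ) - 1) / n) < α₃ ∧ α₃ < 0) ∧
      α₁ ^ (n - 1) - α₁ ^ n = δ * ((n : ℝ) - 1) ^ (n - 1) / (n : ℝ) ^ n ∧
      α₂ ^ (n - 1) - α₂ ^ n = δ * ((n : ℝ) - 1) ^ (n - 1) / (n : ℝ) ^ n ∧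
      α₃ ^ (n - 1) - α₃ ^ n = δ * ((n : ℝ) - 1) ^ (n - 1) / (n : ℝ) ^ n ∧
      ∀ β : ℝ, β ^ (n - 1) - β ^ n = δ * ((n : ℝ) - 1) ^ (n - 1) / (n : ℝ) ^ n →
        β = α₁ ∨ β = α₂ ∨ β = α₃ := by
  obtain ⟨k, rfl⟩ : ∃ k, n = k + 1 := ⟨n - 1, by omega⟩
  have hk0 : k ≠ 0 := by omega
  have hk : Even k := Nat.not_odd_iff_even.mp (Nat.odd_add_one.mp hodd)
  simp only [Nat.add_sub_cancel, Nat.cast_add, Nat.cast_one, add_sub_cancel_right]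
  set c : ℝ := k / (k + 1)
  have hc0 : 0 < c := by positivity
  have hc1 : c < 1 := (div_lt_one (by positivity)).2 (by linarith)
  set t : ℝ := δ * (k : ℝ) ^ k / (k + 1) ^ (k + 1)
  have ht0 : 0 < t := by positivity
  have htc : t < tusi k c := calc
    t = δ * tusi k c := by rw [tusi_div_succ]; exact mul_div_assoc _ _ _
    _ < tusi k c := mul_lt_of_lt_one_left (by rw [tusi_div_succ]; positivity) h1
  have hf : ∀ {a b : ℝ}, ContinuousOn (tusi k) (Icc a b) := (continuous_tusi k).continuousOn
  obtain ⟨α₁, h₁, e₁⟩ := intermediate_value_Ioo hc0.le hf ⟨(tusi_zero hk0).symm ▸ ht0, htc⟩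
  obtain ⟨α₂, h₂, e₂⟩ := intermediate_value_Ioo' hc1.le hf ⟨(tusi_one k).symm ▸ ht0, htc⟩
  obtain ⟨α₃, h₃, e₃⟩ := intermediate_value_Ioo' (neg_lt_zero.2 hc0).le hf
    ⟨(tusi_zero hk0).symm ▸ ht0, htc.trans (tusi_lt_tusi_neg hk hc0)⟩
  exact ⟨α₁, α₂, α₃, h₁, h₂, h₃, e₁, e₂, e₃, fun β hβ => eq_or_eq_or_eq_of_tusi_eq hk hk0 ht0
    (Ioo_subset_Icc_self h₁) (Ioo_subset_Icc_self h₂) h₃.2.le e₁ e₂ e₃ hβ⟩
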